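/- Strong shift equivalence of non-negative integer matrices implies shift equivalence: if E and F are connected by a finite chain of elementary strong shift equivalences, then E is shift equivalent to F. -/
import Mathlib


/-- A square matrix over `ℕ` of arbitrary size, packaged as a sigma type. -/
abbrev NNMatrix := Σ n : ℕ, Matrix (Fin n) (Fin n) ℕ

/-- Elementary strong shift equivalence: `E = RS` and `F = SR` for non-negative integer
matrices `R`, `S`. -/
def ElemSSE (E F : NNMatrix) : Prop :=
  ∃ (R : Matrix (Fin E.1) (Fin F.1) ℕ) (S : Matrix (Fin F.1) (Fin E.1) ℕ),
    E.2 = R * S ∧ F.2 = S * R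

/-- Strong shift equivalence: a finite chain of elementary strong shift equivalences. -/
def StrongShiftEquiv : NNMatrix → NNMatrix → Prop :=
  Relation.TransGen ElemSSE

/-- Shift equivalence with some lag `n ≥ 1`. -/
def ShiftEquiv (E F : NNMatrix) : Prop :=
  ∃ (n : ℕ), 1 ≤ n ∧ ∃ (R : Matrix (Fin E.1) (Fin F.1) ℕ) (S : Matrix (Fin F.1) (Fin E.1) ℕ),
    E.2 ^ n = R * S ∧ F.2 ^ n = S * R ∧ E.2 * R = R * F.2 ∧ S * E.2 = F.2 * S

lemma intertwine_pow {a b : ℕ} (A : Matrix (Fin a) (Fin a) ℕ)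
    (B : Matrix (Fin b) (Fin b) ℕ) (R : Matrix (Fin a) (Fin b) ℕ)
    (h : A * R = R * B) (n : ℕ) : A ^ n * R = R * B ^ n := by
  induction n with
  | zero => simp
  | succ k ih =>
    calc A ^ (k+1) * R = A ^ k * (A * R) := by rw [pow_succ, Matrix.mul_assoc]
    _ = A ^ k * R * B := by rw [h, Matrix.mul_assoc]
    _ = R * B ^ (k+1) := by rw [ih, Matrix.mul_assoc, ← pow_succ]

lemma elemSSE_shiftEquiv {E F : NNMatrix} (h : ElemSSE E F) : ShiftEquiv E F := by
  obtain ⟨R, S, hE, hF⟩ := h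
  refine ⟨1, le_refl 1, R, S, by simpa using hE, by simpa using hF, ?_, ?_⟩
  · rw [hE, hF, Matrix.mul_assoc]
  · rw [hE, hF, Matrix.mul_assoc]

lemma shiftEquiv_trans {E F G : NNMatrix} (h1 : ShiftEquiv E F) (h2 : ShiftEquiv F G) :
    ShiftEquiv E G := by
  obtain ⟨m, hm, R₁, S₁, hE, hF, hER, hSE⟩ := h1
  obtain ⟨n, hn, R₂, S₂, hF', hG, hFR, hSF⟩ := h2
  refine ⟨m + n, le_trans hm (Nat.le_add_right m n), R₁ * R₂, S₂ * S₁, ?_, ?_, ?_, ?_⟩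
  · have hS1 : S₁ * E.2 ^ n = F.2 ^ n * S₁ := (intertwine_pow F.2 E.2 S₁ hSE.symm n).symm
    calc E.2 ^ (m + n) = E.2 ^ m * E.2 ^ n := pow_add _ _ _
    _ = R₁ * (S₁ * E.2 ^ n) := by rw [hE, Matrix.mul_assoc]
    _ = R₁ * (F.2 ^ n * S₁) := by rw [hS1]
    _ = R₁ * (R₂ * (S₂ * S₁)) := by rw [hF', Matrix.mul_assoc]
    _ = R₁ * R₂ * (S₂ * S₁) := by rw [Matrix.mul_assoc]
  · have hR2 : F.2 ^ m * R₂ = R₂ * G.2 ^ m := intertwine_pow F.2 G.2 R₂ hFR m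
    calc G.2 ^ (m + n) = G.2 ^ n * G.2 ^ m := by rw [← pow_add, Nat.add_comm]
    _ = S₂ * (R₂ * G.2 ^ m) := by rw [hG, Matrix.mul_assoc]
    _ = S₂ * (F.2 ^ m * R₂) := by rw [hR2]
    _ = S₂ * (S₁ * (R₁ * R₂)) := by rw [hF, Matrix.mul_assoc]
    _ = S₂ * S₁ * (R₁ * R₂) := by rw [Matrix.mul_assoc]
  · calc E.2 * (R₁ * R₂) = E.2 * R₁ * R₂ := by rw [Matrix.mul_assoc]
    _ = R₁ * (F.2 * R₂) := by rw [hER, Matrix.mul_assoc]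
    _ = R₁ * R₂ * G.2 := by rw [hFR, Matrix.mul_assoc]
  · calc S₂ * S₁ * E.2 = S₂ * (S₁ * E.2) := by rw [Matrix.mul_assoc]
    _ = S₂ * F.2 * S₁ := by rw [hSE, Matrix.mul_assoc]
    _ = G.2 * (S₂ * S₁) := by rw [hSF, Matrix.mul_assoc]

/-- Strong shift equivalence of non-negative integer matrices implies shift equivalence:
if `E` and `F` are connected by a finite chain of elementary strong shift equivalences,
then `E` is shift equivalent to `F`. -/
theorem strongShiftEquiv_implies_shiftEquiv (E F : NNMatrix)
    (h : StrongShiftEquiv E F) : ShiftEquiv E F := by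
  induction h with
  | single h => exact elemSSE_shiftEquiv h
  | tail _ h ih => exact shiftEquiv_trans ih (elemSSE_shiftEquiv h)
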